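/- Consider the clipped empirical-frequency forecaster for binary labels: given y_1, …, y_n ∈ {0,1}, at each round t = 1, …, n let m_{t−1} = ∑_{j<t} y_j, q_t = (m_{t−1} + 1)/(t + 1), γ_t = 1/(2√(t + 1)), and predict p_t = 0 if q_t < 1/2 − γ_t, p_t = 1 if q_t > 1/2 + γ_t, and p_t = 1/2 + (q_t − 1/2)/(2γ_t) otherwise. Then for every binary sequence y_1, …, y_n, ∑_{t=1}^n |p_t − y_t| − min_{p ∈ [0,1]} ∑_{t=1}^n |p − y_t| ≤ √(n + 1). -/

import Mathlib

/-- The binary label at (0-based) round index `t`, viewed as a real number. -/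
def binLabel (y : ℕ → Bool) (t : ℕ) : ℝ := if y t then 1 else 0

/-- The clipped empirical-frequency forecaster: at (0-based) round index `i`
(i.e. round `t = i + 1`), with `m = ∑_{j<i} y_j` ones seen so far, it forms the
Laplace estimate `q = (m + 1)/(t + 1)`, the confidence width
`γ = 1/(2√(t + 1))`, and predicts `0` if `q < 1/2 − γ`, `1` if `q > 1/2 + γ`,
and `1/2 + (q − 1/2)/(2γ)` otherwise. -/
noncomputable def clippedPred (y : ℕ → Bool) (i : ℕ) : ℝ :=
  let m : ℝ := ∑ j ∈ Finset.range i, binLabel y j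
  let q : ℝ := (m + 1) / ((i : ℝ) + 2)
  let γ : ℝ := 1 / (2 * Real.sqrt ((i : ℝ) + 2))
  if q < 1 / 2 - γ then 0
  else if q > 1 / 2 + γ then 1
  else 1 / 2 + (q - 1 / 2) / (2 * γ)

/-!
Write `s_t = ±1` for the labels and `d_t = ∑_{j<t} s_j`. The forecaster predicts `1/2 + c_t`,
where `c_t` is `d_t / (2 g_t)` clamped to `[-1/2, 1/2]` and `g_t = √(t + 2)`: this is the slope of
the Huber potential `Φ_g` of width `g_t` at `d_t`. Its loss at round `t` is `1/2 - s_t c_t`, while the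
best constant prediction loses `(n - |d_n|) / 2` in total. As `Φ_g` is `1/(2g)`-smooth and grows by
at most `(g' - g) / 4` when the width grows to `g'`, telescoping gives
`|d_n| / 2 ≤ Φ_{g_n}(d_n) ≤ ∑ s_t c_t + ∑_{t<n} 1 / (4 g_t) + g_n / 4`, so the regret is at most
`(√(n + 1) - 1) / 2 + √(n + 2) / 4 ≤ √(n + 1)`.
-/

open Finset

theorem mul_sub_clamp_nonpos {a b c u : ℝ} (hc : c ∈ Set.Icc a b) :
    (c - max a (min b u)) * (u - max a (min b u)) ≤ 0 := by
  obtain ⟨hac, hcb⟩ := hc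
  rcases le_total u a with hua | hau
  · rw [min_eq_right (hua.trans (hac.trans hcb)), max_eq_left hua]
    nlinarith
  rcases le_total u b with hub | hbu
  · rw [min_eq_right hub, max_eq_right hau]
    simp
  · rw [min_eq_left hbu, max_eq_right (hac.trans hcb)]
    nlinarith

noncomputable def huberSlope (g d : ℝ) : ℝ := max (-(1 / 2)) (min (1 / 2) (d / (2 * g)))

/-- For `g > 0` this is the Huber function, `(d² + g²) / (4g)` for `|d| ≤ g` and `|d| / 2`
otherwise, written as the maximum of `g / 4 + c d - g c²` over `|c| ≤ 1 / 2`, which is attained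
at `c = huberSlope g d`. -/
noncomputable def huber (g d : ℝ) : ℝ := g / 4 + huberSlope g d * d - g * huberSlope g d ^ 2

theorem huberSlope_mem_Icc (g d : ℝ) : huberSlope g d ∈ Set.Icc (-(1 / 2)) (1 / 2) :=
  ⟨le_max_left _ _, max_le (by norm_num) (min_le_left _ _)⟩

theorem huber_zero (g : ℝ) : huber g 0 = g / 4 := by
  simp [huber, huberSlope]

theorem le_huber {g c : ℝ} (d : ℝ) (hg : 0 < g) (hc : c ∈ Set.Icc (-(1 / 2)) (1 / 2)) :
    g / 4 + c * d - g * c ^ 2 + g * (c - huberSlope g d) ^ 2 ≤ huber g d := by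
  have hvar := mul_sub_clamp_nonpos (u := d / (2 * g)) hc
  rw [← huberSlope] at hvar
  have key : huber g d - (g / 4 + c * d - g * c ^ 2 + g * (c - huberSlope g d) ^ 2) =
      -(2 * g) * ((c - huberSlope g d) * (d / (2 * g) - huberSlope g d)) := by
    unfold huber
    field_simp
    ring
  nlinarith [mul_le_mul_of_nonneg_left hvar hg.le]

theorem abs_div_two_le_huber {g : ℝ} (d : ℝ) (hg : 0 < g) : |d| / 2 ≤ huber g d := by
  have hpos := le_huber d hg (c := 1 / 2) (by norm_num)
  have hneg := le_huber d hg (c := -(1 / 2)) (by norm_num)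
  rw [div_le_iff₀ two_pos, abs_le']
  constructor <;> nlinarith

theorem huber_le_huber_add {g g' : ℝ} (d : ℝ) (hg : 0 < g) (hgg' : g ≤ g') :
    huber g' d ≤ huber g d + (g' - g) / 4 := by
  have h := le_huber d hg (huberSlope_mem_Icc g' d)
  unfold huber at h ⊢
  nlinarith [sq_nonneg (huberSlope g' d), sq_nonneg (huberSlope g' d - huberSlope g d)]

theorem huber_add_le {g : ℝ} (d s : ℝ) (hg : 0 < g) :
    huber g (d + s) ≤ huber g d + s * huberSlope g d + s ^ 2 / (4 * g) := by
  set c := huberSlope g d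
  set c' := huberSlope g (d + s)
  have h := le_huber d hg (huberSlope_mem_Icc g (d + s))
  have hamgm : (c' - c) * s - g * (c' - c) ^ 2 ≤ s ^ 2 / (4 * g) := by
    rw [le_div_iff₀ (by positivity)]
    nlinarith [sq_nonneg (s - 2 * g * (c' - c))]
  have : huber g (d + s) = g / 4 + c' * (d + s) - g * c' ^ 2 := rfl
  linarith

theorem huber_le_sum {g : ℕ → ℝ} (d : ℕ → ℝ) (hg₀ : 0 < g 0) (hg : Monotone g) (hd₀ : d 0 = 0)
    (n : ℕ) :
    huber (g n) (d n) ≤ g n / 4 + ∑ t ∈ range n,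
      ((d (t + 1) - d t) * huberSlope (g t) (d t) + (d (t + 1) - d t) ^ 2 / (4 * g t)) := by
  induction n with
  | zero => simp [hd₀, huber_zero]
  | succ k ih =>
    have hgk : 0 < g k := hg₀.trans_le (hg k.zero_le)
    have hwiden := huber_le_huber_add (d (k + 1)) hgk (hg k.le_succ)
    have hstep := huber_add_le (d k) (d (k + 1) - d k) hgk
    rw [add_sub_cancel] at hstep
    rw [sum_range_succ]
    linarith

noncomputable def labelSign (y : ℕ → Bool) (t : ℕ) : ℝ := 2 * binLabel y t - 1

noncomputable def labelWalk (y : ℕ → Bool) (n : ℕ) : ℝ := ∑ t ∈ range n, labelSign y t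

theorem labelSign_sq (y : ℕ → Bool) (t : ℕ) : labelSign y t ^ 2 = 1 := by
  unfold labelSign binLabel
  split <;> norm_num

theorem labelWalk_eq (y : ℕ → Bool) (n : ℕ) :
    labelWalk y n = 2 * ∑ t ∈ range n, binLabel y t - n := by
  simp [labelWalk, labelSign, sum_sub_distrib, mul_sum]

theorem abs_sub_binLabel {p : ℝ} (hp : p ∈ Set.Icc (0 : ℝ) 1) (y : ℕ → Bool) (t : ℕ) :
    |p - binLabel y t| = 1 / 2 - labelSign y t * (p - 1 / 2) := by
  obtain ⟨hp₀, hp₁⟩ := hp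
  unfold labelSign binLabel
  split
  · rw [abs_of_nonpos (by linarith)]; ring
  · rw [abs_of_nonneg (by linarith)]; ring

theorem sum_abs_sub_binLabel {p : ℝ} (hp : p ∈ Set.Icc (0 : ℝ) 1) (y : ℕ → Bool) (n : ℕ) :
    ∑ t ∈ range n, |p - binLabel y t| = n / 2 - labelWalk y n * (p - 1 / 2) := by
  simp only [abs_sub_binLabel hp, sum_sub_distrib, sum_const, card_range, nsmul_eq_mul, labelWalk,
    sum_mul]
  ring

theorem sub_abs_labelWalk_le_sInf (y : ℕ → Bool) (n : ℕ) :
    (n - |labelWalk y n|) / 2 ≤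
      sInf ((fun p : ℝ => ∑ t ∈ range n, |p - binLabel y t|) '' Set.Icc (0 : ℝ) 1) := by
  refine le_csInf ⟨_, 0, by norm_num, rfl⟩ ?_
  rintro _ ⟨p, hp, rfl⟩
  have hdist : |p - 1 / 2| ≤ 1 / 2 := abs_le.2 ⟨by linarith [hp.1], by linarith [hp.2]⟩
  have := (le_abs_self (labelWalk y n * (p - 1 / 2))).trans_eq (abs_mul _ _)
  dsimp only
  rw [sum_abs_sub_binLabel hp]
  nlinarith [abs_nonneg (labelWalk y n)]

theorem clip_eq_half_add_clamp {q γ : ℝ} (hγ : 0 < γ) :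
    (if q < 1 / 2 - γ then 0 else if q > 1 / 2 + γ then 1 else 1 / 2 + (q - 1 / 2) / (2 * γ)) =
      1 / 2 + max (-(1 / 2)) (min (1 / 2) ((q - 1 / 2) / (2 * γ))) := by
  split_ifs with hlow hhigh
  · rw [min_eq_right (by rw [div_le_iff₀ (by positivity)]; linarith),
      max_eq_left (by rw [div_le_iff₀ (by positivity)]; linarith)]
    norm_num
  · rw [min_eq_left (by rw [le_div_iff₀ (by positivity)]; linarith),
      max_eq_right (by norm_num)]
    norm_num
  · rw [min_eq_right (by rw [div_le_iff₀ (by positivity)]; linarith),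
      max_eq_right (by rw [le_div_iff₀ (by positivity)]; linarith)]

theorem clippedPred_eq (y : ℕ → Bool) (i : ℕ) :
    clippedPred y i = 1 / 2 + huberSlope √((i : ℝ) + 2) (labelWalk y i) := by
  have hsq := Real.sq_sqrt (by positivity : (0 : ℝ) ≤ i + 2)
  unfold clippedPred
  rw [clip_eq_half_add_clamp (by positivity), huberSlope, labelWalk_eq]
  congr 3
  field_simp
  rw [hsq]
  ring

theorem abs_clippedPred_sub_binLabel (y : ℕ → Bool) (t : ℕ) :
    |clippedPred y t - binLabel y t| =
      1 / 2 - labelSign y t * huberSlope √((t : ℝ) + 2) (labelWalk y t) := by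
  obtain ⟨hlo, hhi⟩ := huberSlope_mem_Icc √((t : ℝ) + 2) (labelWalk y t)
  rw [clippedPred_eq, abs_sub_binLabel ⟨by linarith, by linarith⟩, add_sub_cancel_left]

theorem huber_labelWalk_le (y : ℕ → Bool) (n : ℕ) :
    huber √((n : ℝ) + 2) (labelWalk y n) ≤ √((n : ℝ) + 2) / 4 +
      ∑ t ∈ range n, labelSign y t * huberSlope √((t : ℝ) + 2) (labelWalk y t) +
      ∑ t ∈ range n, 1 / (4 * √((t : ℝ) + 2)) := by
  have h := huber_le_sum (g := fun t : ℕ => √((t : ℝ) + 2)) (labelWalk y) (by positivity)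
    (fun a b hab => Real.sqrt_le_sqrt (by gcongr)) (by simp [labelWalk]) n
  simp only [labelWalk, sum_range_succ_sub_sum, labelSign_sq, sum_add_distrib] at h ⊢
  linarith

theorem inv_two_sqrt_le_sqrt_sub {x : ℝ} (hx : 0 ≤ x) : 1 / (2 * √(x + 1)) ≤ √(x + 1) - √x := by
  have ha := Real.sq_sqrt hx
  have hb := Real.sq_sqrt (by positivity : 0 ≤ x + 1)
  have hab : √x ≤ √(x + 1) := Real.sqrt_le_sqrt (by linarith)
  rw [div_le_iff₀ (by positivity)]
  nlinarith [Real.sqrt_nonneg x]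

theorem sum_inv_four_sqrt_le (n : ℕ) :
    ∑ t ∈ range n, 1 / (4 * √((t : ℝ) + 2)) ≤ (√((n : ℝ) + 1) - 1) / 2 := by
  have h := sum_range_sub (fun t : ℕ => √((t : ℝ) + 1)) n
  simp only [Nat.cast_add, Nat.cast_one, Nat.cast_zero, zero_add, Real.sqrt_one] at h
  rw [← h, sum_div]
  refine sum_le_sum fun t _ => ?_
  have := inv_two_sqrt_le_sqrt_sub (by positivity : (0 : ℝ) ≤ t + 1)
  rw [add_assoc (t : ℝ), one_add_one_eq_two] at this ⊢
  rw [show 1 / (4 * √((t : ℝ) + 2)) = 1 / (2 * √((t : ℝ) + 2)) / 2 by ring]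
  linarith

/-- For every binary sequence `y_1, …, y_n`, the regret of the
clipped empirical-frequency forecaster satisfies
`∑_{t=1}^n |p_t − y_t| − min_{p ∈ [0,1]} ∑_{t=1}^n |p − y_t| ≤ √(n + 1)`. -/
theorem clipped_forecaster_regret (n : ℕ) (y : ℕ → Bool) :
    (∑ t ∈ Finset.range n, |clippedPred y t - binLabel y t|) -
        sInf ((fun p : ℝ => ∑ t ∈ Finset.range n, |p - binLabel y t|) '' Set.Icc (0 : ℝ) 1)
      ≤ Real.sqrt ((n : ℝ) + 1) := by
  have hloss : ∑ t ∈ range n, |clippedPred y t - binLabel y t| = n / 2 -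
      ∑ t ∈ range n, labelSign y t * huberSlope √((t : ℝ) + 2) (labelWalk y t) := by
    simp only [abs_clippedPred_sub_binLabel, sum_sub_distrib, sum_const, card_range, nsmul_eq_mul]
    ring
  have hbest := sub_abs_labelWalk_le_sInf y n
  have hpot := (abs_div_two_le_huber (labelWalk y n) (by positivity)).trans (huber_labelWalk_le y n)
  have hsum := sum_inv_four_sqrt_le n
  have hroot := Real.sq_sqrt (by positivity : (0 : ℝ) ≤ n + 1)
  have hwidth : √((n : ℝ) + 2) ≤ √((n : ℝ) + 1) + 1 :=
    Real.sqrt_le_iff.2 ⟨by positivity, by nlinarith [Real.sqrt_nonneg ((n : ℝ) + 1)]⟩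
  linarith [Real.sqrt_nonneg ((n : ℝ) + 1)]
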